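/- arXiv:2201.00119 — 6 statements merged into one kernel-verified Lean document; each statement's English description precedes it below -/
import Mathlib

section
/- Let p ≥ 1, let w₁, w₂ ∈ ℂ with Re(w₁) ≥ 0 and Re(w₂) ≥ 0, let A be a p×p Hermitian positive semidefinite complex matrix, let B be any p×p complex matrix, and let q ∈ ℂ^p. Then the matrices w₁A + I and w₂A + I are invertible, and |q*B(w₁A+I)⁻¹q − q*B(w₂A+I)⁻¹q| ≤ |w₁ − w₂| · |q|² · ‖B‖ · ‖A‖. -/
/-!
For `A ⪰ 0` and `Re w ≥ 0`, `Re ⟪x, (w A + 1) x⟫ = Re w · ⟪x, A x⟫ + ‖x‖² ≥ ‖x‖²`, so by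
Cauchy–Schwarz `w A + 1` is injective and its inverse is a contraction. The resolvent identity
`(w₁A + 1)⁻¹ - (w₂A + 1)⁻¹ = (w₂ - w₁) (w₁A + 1)⁻¹ A (w₂A + 1)⁻¹` then reduces the claim to the
bound `|q* M q| ≤ ‖M‖ |q|²` with `‖M‖ ≤ ‖B‖ ‖A‖`.
-/

open Matrix
open scoped Matrix.Norms.L2Operator ComplexOrder

namespace Matrix

variable {n 𝕜 : Type*} [Fintype n] [DecidableEq n] [RCLike 𝕜]

lemma norm_star_dotProduct_mulVec_le (M : Matrix n n 𝕜) (x : EuclideanSpace 𝕜 n) :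
    ‖star (x : n → 𝕜) ⬝ᵥ (M *ᵥ x)‖ ≤ ‖M‖ * ‖x‖ ^ 2 := by
  have h := norm_inner_le_norm (𝕜 := 𝕜) x ((EuclideanSpace.equiv n 𝕜).symm (M *ᵥ x))
  rw [EuclideanSpace.inner_eq_star_dotProduct, dotProduct_comm] at h
  calc _ ≤ ‖x‖ * (‖M‖ * ‖x‖) := h.trans (by gcongr; exact l2_opNorm_mulVec M x)
    _ = ‖M‖ * ‖x‖ ^ 2 := by ring

namespace PosSemidef

variable {A : Matrix n n 𝕜} {w : 𝕜}

lemma norm_sq_le_re_star_dotProduct_smul_add_one_mulVec (hA : A.PosSemidef)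
    (hw : 0 ≤ RCLike.re w) (x : EuclideanSpace 𝕜 n) :
    ‖x‖ ^ 2 ≤ RCLike.re (star (x : n → 𝕜) ⬝ᵥ ((w • A + 1) *ᵥ x)) := by
  obtain ⟨hre, him⟩ := RCLike.nonneg_iff.mp (hA.dotProduct_mulVec_nonneg (x : n → 𝕜))
  have hx : RCLike.re (star (x : n → 𝕜) ⬝ᵥ x) = ‖x‖ ^ 2 := by
    rw [← inner_self_eq_norm_sq (𝕜 := 𝕜), EuclideanSpace.inner_eq_star_dotProduct, dotProduct_comm]
  rw [add_mulVec, smul_mulVec, one_mulVec, dotProduct_add, dotProduct_smul, smul_eq_mul,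
    map_add, RCLike.mul_re, him, mul_zero, sub_zero, hx]
  nlinarith [mul_nonneg hw hre]

lemma norm_le_norm_smul_add_one_mulVec (hA : A.PosSemidef) (hw : 0 ≤ RCLike.re w)
    (x : EuclideanSpace 𝕜 n) :
    ‖x‖ ≤ ‖(EuclideanSpace.equiv n 𝕜).symm ((w • A + 1) *ᵥ x)‖ := by
  set y := (EuclideanSpace.equiv n 𝕜).symm ((w • A + 1) *ᵥ x)
  have hxy : ‖x‖ ^ 2 ≤ ‖x‖ * ‖y‖ := by
    calc ‖x‖ ^ 2 ≤ RCLike.re (inner 𝕜 x y) := by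
          rw [EuclideanSpace.inner_eq_star_dotProduct, dotProduct_comm]
          exact hA.norm_sq_le_re_star_dotProduct_smul_add_one_mulVec hw x
      _ ≤ ‖inner 𝕜 x y‖ := RCLike.re_le_norm _
      _ ≤ ‖x‖ * ‖y‖ := norm_inner_le_norm x y
  rcases (norm_nonneg x).eq_or_lt with h0 | h0
  · exact h0 ▸ norm_nonneg y
  · nlinarith

lemma isUnit_smul_add_one (hA : A.PosSemidef) (hw : 0 ≤ RCLike.re w) : IsUnit (w • A + 1) := by
  rw [← mulVec_injective_iff_isUnit]
  intro x y hxy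
  have h := hA.norm_le_norm_smul_add_one_mulVec hw ((EuclideanSpace.equiv n 𝕜).symm (x - y))
  simpa [mulVec_sub, hxy, sub_eq_zero] using h

lemma l2_opNorm_inv_smul_add_one_le_one (hA : A.PosSemidef) (hw : 0 ≤ RCLike.re w) :
    ‖(w • A + 1)⁻¹‖ ≤ 1 := by
  have hdet := (isUnit_iff_isUnit_det _).mp (hA.isUnit_smul_add_one hw)
  rw [l2_opNorm_def]
  refine ContinuousLinearMap.opNorm_le_bound _ zero_le_one fun y ↦ ?_
  have h := hA.norm_le_norm_smul_add_one_mulVec hw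
    ((EuclideanSpace.equiv n 𝕜).symm ((w • A + 1)⁻¹ *ᵥ y))
  simp only [PiLp.continuousLinearEquiv_symm_apply, WithLp.ofLp_toLp, mulVec_mulVec,
    mul_nonsing_inv _ hdet, one_mulVec, WithLp.toLp_ofLp] at h
  rwa [one_mul]

end PosSemidef

lemma inv_smul_add_one_sub_inv_smul_add_one {α : Type*} [CommRing α] {A : Matrix n n α}
    {w₁ w₂ : α} (h₁ : IsUnit (w₁ • A + 1)) (h₂ : IsUnit (w₂ • A + 1)) :
    (w₁ • A + 1)⁻¹ - (w₂ • A + 1)⁻¹ = (w₂ - w₁) • ((w₁ • A + 1)⁻¹ * A * (w₂ • A + 1)⁻¹) := by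
  rw [inv_sub_inv (iff_of_true h₁ h₂), add_sub_add_right_eq_sub, ← sub_smul, mul_smul_comm,
    smul_mul]

end Matrix

theorem quadratic_form_resolvent_perturbation_general
    {p : ℕ} (w₁ w₂ : ℂ) (hw₁ : 0 ≤ w₁.re) (hw₂ : 0 ≤ w₂.re)
    (A B : Matrix (Fin p) (Fin p) ℂ) (hA : A.PosSemidef)
    (q : EuclideanSpace ℂ (Fin p)) :
    IsUnit (w₁ • A + 1) ∧ IsUnit (w₂ • A + 1) ∧
      ‖((star (q : Fin p → ℂ)) ⬝ᵥ ((B * (w₁ • A + 1)⁻¹) *ᵥ (q : Fin p → ℂ)) -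
            (star (q : Fin p → ℂ)) ⬝ᵥ ((B * (w₂ • A + 1)⁻¹) *ᵥ (q : Fin p → ℂ)))‖
        ≤ ‖w₁ - w₂‖ * ‖q‖ ^ 2 * ‖B‖ * ‖A‖ := by
  have hu₁ := hA.isUnit_smul_add_one hw₁
  have hu₂ := hA.isUnit_smul_add_one hw₂
  refine ⟨hu₁, hu₂, ?_⟩
  have hC : ‖(w₁ • A + 1)⁻¹ * A * (w₂ • A + 1)⁻¹‖ ≤ ‖A‖ :=
    calc _ ≤ ‖(w₁ • A + 1)⁻¹‖ * ‖A‖ * ‖(w₂ • A + 1)⁻¹‖ := norm_mul₃_le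
      _ ≤ 1 * ‖A‖ * 1 := by
        gcongr
        exacts [hA.l2_opNorm_inv_smul_add_one_le_one hw₁, hA.l2_opNorm_inv_smul_add_one_le_one hw₂]
      _ = ‖A‖ := by ring
  rw [← dotProduct_sub, ← sub_mulVec, ← mul_sub, inv_smul_add_one_sub_inv_smul_add_one hu₁ hu₂,
    mul_smul_comm, smul_mulVec, dotProduct_smul, norm_smul, norm_sub_rev]
  calc _ ≤ ‖w₁ - w₂‖ * (‖B * ((w₁ • A + 1)⁻¹ * A * (w₂ • A + 1)⁻¹)‖ * ‖q‖ ^ 2) := by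
        gcongr
        exact norm_star_dotProduct_mulVec_le _ q
    _ ≤ ‖w₁ - w₂‖ * (‖B‖ * ‖A‖ * ‖q‖ ^ 2) := by
        gcongr
        exact norm_mul_le_of_le le_rfl hC
    _ = ‖w₁ - w₂‖ * ‖q‖ ^ 2 * ‖B‖ * ‖A‖ := by ring

/-- **Lemma 1.** Let `w₁, w₂ ∈ ℂ` with nonnegative real parts, `A` a `p × p` Hermitian
positive semidefinite complex matrix, `B` any `p × p` complex matrix, and `q ∈ ℂ^p`.
Then `w₁A + I` and `w₂A + I` are invertible, and
`|q*B(w₁A+I)⁻¹q − q*B(w₂A+I)⁻¹q| ≤ |w₁ − w₂| · |q|² · ‖B‖ · ‖A‖`,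
where `‖·‖` is the operator norm and `|q|` the Euclidean norm. -/
theorem quadratic_form_resolvent_perturbation
    {p : ℕ} (hp : 1 ≤ p) (w₁ w₂ : ℂ) (hw₁ : 0 ≤ w₁.re) (hw₂ : 0 ≤ w₂.re)
    (A B : Matrix (Fin p) (Fin p) ℂ) (hA : A.PosSemidef)
    (q : EuclideanSpace ℂ (Fin p)) :
    IsUnit (w₁ • A + 1) ∧ IsUnit (w₂ • A + 1) ∧
      ‖((star (q : Fin p → ℂ)) ⬝ᵥ ((B * (w₁ • A + 1)⁻¹) *ᵥ (q : Fin p → ℂ)) -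
            (star (q : Fin p → ℂ)) ⬝ᵥ ((B * (w₂ • A + 1)⁻¹) *ᵥ (q : Fin p → ℂ)))‖
        ≤ ‖w₁ - w₂‖ * ‖q‖ ^ 2 * ‖B‖ * ‖A‖ :=
  quadratic_form_resolvent_perturbation_general w₁ w₂ hw₁ hw₂ A B hA q
end

section
/- Let p ≥ 1, let z ∈ ℂ with v = Im(z) > 0, let A be any p×p complex matrix, let B be a p×p Hermitian matrix, let q ∈ ℂ^p, and let θ ∈ ℝ. Then B − zI and B + θqq* − zI are invertible and |tr(((B − zI)⁻¹ − (B + θqq* − zI)⁻¹)A)| ≤ ‖A‖ / v. -/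
/-!
Write `R = (B - z)⁻¹` and `x = R q`. The Sherman–Morrison formula turns the trace into
`θ ((R* q)* A x) / (1 + θ q* x)`. As `B` is Hermitian, `Im (q* x) = v ‖x‖²` and `‖R* q‖ = ‖x‖`,
so the numerator is at most `|θ| ‖A‖ ‖x‖²` in modulus, while the denominator is at least its
imaginary part `|θ| v ‖x‖²` in modulus.
-/

open Matrix
open scoped Matrix.Norms.L2Operator

namespace Matrix

section RankOne

variable {n K : Type*} [Fintype n] [DecidableEq n] [Field K]
  {S : Matrix n n K} (hS : IsUnit S) (u w : n → K)
include hS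

theorem add_vecMulVec_mulVec_inv_mulVec :
    (S + vecMulVec u w) *ᵥ (S⁻¹ *ᵥ u) = (1 + w ⬝ᵥ (S⁻¹ *ᵥ u)) • u := by
  rw [add_mulVec, mulVec_mulVec, mul_nonsing_inv _ ((isUnit_iff_isUnit_det S).mp hS), one_mulVec,
    vecMulVec_mulVec, op_smul_eq_smul, add_smul, one_smul]

theorem one_add_dotProduct_inv_mulVec_ne_zero (hT : IsUnit (S + vecMulVec u w)) :
    1 + w ⬝ᵥ (S⁻¹ *ᵥ u) ≠ 0 := by
  intro h
  have hx : S⁻¹ *ᵥ u = 0 := by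
    apply mulVec_injective_iff_isUnit.mpr hT
    rw [add_vecMulVec_mulVec_inv_mulVec hS, h, zero_smul, mulVec_zero]
  simp [hx] at h

/-- Sherman–Morrison. -/
theorem inv_add_vecMulVec_mulVec (hT : IsUnit (S + vecMulVec u w)) :
    (S + vecMulVec u w)⁻¹ *ᵥ u = (1 + w ⬝ᵥ (S⁻¹ *ᵥ u))⁻¹ • (S⁻¹ *ᵥ u) := by
  have hc := one_add_dotProduct_inv_mulVec_ne_zero hS u w hT
  rw [eq_inv_smul_iff₀ hc, ← mulVec_smul, ← add_vecMulVec_mulVec_inv_mulVec hS, mulVec_mulVec,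
    nonsing_inv_mul _ ((isUnit_iff_isUnit_det _).mp hT), one_mulVec]

theorem trace_inv_sub_inv_add_vecMulVec_mul (hT : IsUnit (S + vecMulVec u w)) (A : Matrix n n K) :
    trace ((S⁻¹ - (S + vecMulVec u w)⁻¹) * A) =
      (w ᵥ* S⁻¹) ⬝ᵥ (A *ᵥ (S⁻¹ *ᵥ u)) / (1 + w ⬝ᵥ (S⁻¹ *ᵥ u)) := by
  rw [← neg_sub, inv_sub_inv (by simp [hS, hT]), ← Matrix.neg_mul, ← Matrix.mul_neg, neg_sub,
    add_sub_cancel_left, mul_vecMulVec, vecMulVec_mul, vecMulVec_mul, trace_vecMulVec,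
    inv_add_vecMulVec_mulVec hS u w hT, dotProduct_comm, ← dotProduct_mulVec, mulVec_smul,
    dotProduct_smul, smul_eq_mul, div_eq_inv_mul]

end RankOne

section Euclidean

variable {m n 𝕜 : Type*} [Fintype m] [Fintype n] [RCLike 𝕜]

theorem star_dotProduct_self_eq_norm_sq (x : n → 𝕜) :
    star x ⬝ᵥ x = (‖WithLp.toLp 2 x‖ : 𝕜) ^ 2 := by
  rw [← inner_self_eq_norm_sq_to_K, EuclideanSpace.inner_toLp_toLp, dotProduct_comm]

theorem norm_star_dotProduct_mulVec_le_s1 [DecidableEq n] (A : Matrix m n 𝕜) (x : n → 𝕜)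
    (y : m → 𝕜) : ‖star y ⬝ᵥ (A *ᵥ x)‖ ≤ ‖WithLp.toLp 2 y‖ * (‖A‖ * ‖WithLp.toLp 2 x‖) := by
  rw [dotProduct_comm, ← EuclideanSpace.inner_toLp_toLp]
  exact (norm_inner_le_norm _ _).trans
    (mul_le_mul_of_nonneg_left (A.l2_opNorm_mulVec _) (norm_nonneg _))

end Euclidean

namespace IsHermitian

variable {n : Type*} [Fintype n] [DecidableEq n] {B : Matrix n n ℂ} (hB : B.IsHermitian)
include hB

theorem im_star_dotProduct_sub_smul_mulVec (z : ℂ) (x : n → ℂ) :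
    (star x ⬝ᵥ ((B - z • 1) *ᵥ x)).im = -z.im * ‖WithLp.toLp 2 x‖ ^ 2 := by
  have hreal : (star x ⬝ᵥ (B *ᵥ x)).im = 0 := hB.im_star_dotProduct_mulVec_self x
  rw [sub_mulVec, smul_mulVec, one_mulVec, dotProduct_sub, dotProduct_smul,
    star_dotProduct_self_eq_norm_sq, smul_eq_mul, RCLike.ofReal_eq_complex_ofReal,
    ← Complex.ofReal_pow, Complex.sub_im, Complex.mul_im, Complex.ofReal_re, Complex.ofReal_im,
    hreal]
  ring

theorem isUnit_sub_smul {z : ℂ} (hz : z.im ≠ 0) : IsUnit (B - z • 1) := by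
  rw [← mulVec_injective_iff_isUnit, ← coe_mulVecLin, injective_iff_map_eq_zero]
  intro x hx
  have h := hB.im_star_dotProduct_sub_smul_mulVec z x
  rw [mulVecLin_apply] at hx
  simpa [hx, hz] using h

theorem im_star_dotProduct_inv_sub_smul_mulVec {z : ℂ} (hz : z.im ≠ 0) (q : n → ℂ) :
    (star q ⬝ᵥ ((B - z • 1)⁻¹ *ᵥ q)).im = z.im * ‖WithLp.toLp 2 ((B - z • 1)⁻¹ *ᵥ q)‖ ^ 2 := by
  set x := (B - z • 1)⁻¹ *ᵥ q
  have hq : q = (B - z • 1) *ᵥ x := by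
    rw [mulVec_mulVec, mul_nonsing_inv _ ((isUnit_iff_isUnit_det _).mp (hB.isUnit_sub_smul hz)),
      one_mulVec]
  rw [star_dotProduct, Complex.star_def, Complex.conj_im, hq,
    hB.im_star_dotProduct_sub_smul_mulVec, neg_mul, neg_neg]

theorem norm_conjTranspose_inv_sub_smul_mulVec {z : ℂ} (hz : z.im ≠ 0) (q : n → ℂ) :
    ‖WithLp.toLp 2 ((B - z • 1)⁻¹ᴴ *ᵥ q)‖ = ‖WithLp.toLp 2 ((B - z • 1)⁻¹ *ᵥ q)‖ := by
  have hconj : (B - z • 1)⁻¹ᴴ = (B - star z • 1)⁻¹ := by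
    rw [conjTranspose_nonsing_inv, conjTranspose_sub, hB.eq, conjTranspose_smul, conjTranspose_one]
  have hstar : star q ⬝ᵥ ((B - z • 1)⁻¹ᴴ *ᵥ q) = star (star q ⬝ᵥ ((B - z • 1)⁻¹ *ᵥ q)) := by
    rw [star_dotProduct, star_mulVec, conjTranspose_conjTranspose, ← dotProduct_mulVec]
  have h₁ := hB.im_star_dotProduct_inv_sub_smul_mulVec hz q
  have h₂ := hB.im_star_dotProduct_inv_sub_smul_mulVec (z := star z) (by simpa using hz) q
  rw [← hconj, hstar, Complex.star_def, Complex.conj_im, Complex.conj_im, h₁] at h₂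
  have hsq : ‖WithLp.toLp 2 ((B - z • 1)⁻¹ᴴ *ᵥ q)‖ ^ 2 = ‖WithLp.toLp 2 ((B - z • 1)⁻¹ *ᵥ q)‖ ^ 2 :=
    mul_left_cancel₀ hz (by linarith)
  exact (sq_eq_sq₀ (norm_nonneg _) (norm_nonneg _)).mp hsq

theorem norm_star_dotProduct_inv_sub_smul_mulVec_le {z : ℂ} (hz : z.im ≠ 0) (A : Matrix n n ℂ)
    (q : n → ℂ) :
    ‖star ((B - z • 1)⁻¹ᴴ *ᵥ q) ⬝ᵥ (A *ᵥ ((B - z • 1)⁻¹ *ᵥ q))‖ ≤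
      ‖A‖ * ‖WithLp.toLp 2 ((B - z • 1)⁻¹ *ᵥ q)‖ ^ 2 := by
  have h := norm_star_dotProduct_mulVec_le_s1 A ((B - z • 1)⁻¹ *ᵥ q) ((B - z • 1)⁻¹ᴴ *ᵥ q)
  rwa [hB.norm_conjTranspose_inv_sub_smul_mulVec hz, mul_left_comm, ← sq] at h

theorem le_norm_one_add_ofReal_mul_star_dotProduct_inv_sub_smul_mulVec {z : ℂ} (hz : 0 < z.im)
    (θ : ℝ) (q : n → ℂ) :
    |θ| * (z.im * ‖WithLp.toLp 2 ((B - z • 1)⁻¹ *ᵥ q)‖ ^ 2) ≤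
      ‖1 + (θ : ℂ) * (star q ⬝ᵥ ((B - z • 1)⁻¹ *ᵥ q))‖ := by
  have him := Complex.abs_im_le_norm (1 + (θ : ℂ) * (star q ⬝ᵥ ((B - z • 1)⁻¹ *ᵥ q)))
  rwa [Complex.add_im, Complex.one_im, zero_add, Complex.im_ofReal_mul,
    hB.im_star_dotProduct_inv_sub_smul_mulVec hz.ne', abs_mul,
    abs_of_nonneg (by positivity : 0 ≤ z.im * ‖WithLp.toLp 2 ((B - z • 1)⁻¹ *ᵥ q)‖ ^ 2)] at him

end IsHermitian

end Matrix

theorem trace_resolvent_rank_one_perturbation_general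
    {p : ℕ} (z : ℂ) (v : ℝ) (hv : z.im = v) (hv0 : 0 < v)
    (A B : Matrix (Fin p) (Fin p) ℂ) (hB : B.IsHermitian)
    (q : Fin p → ℂ) (θ : ℝ) :
    IsUnit (B - z • (1 : Matrix (Fin p) (Fin p) ℂ)) ∧
    IsUnit (B + (θ : ℂ) • vecMulVec q (star q) - z • (1 : Matrix (Fin p) (Fin p) ℂ)) ∧
      ‖(Matrix.trace
            (((B - z • (1 : Matrix (Fin p) (Fin p) ℂ))⁻¹ -
                (B + (θ : ℂ) • vecMulVec q (star q) -
                  z • (1 : Matrix (Fin p) (Fin p) ℂ))⁻¹) * A))‖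
        ≤ ‖A‖ / v := by
  subst hv
  have hz : z.im ≠ 0 := hv0.ne'
  have hS := hB.isUnit_sub_smul hz
  have hqq : (vecMulVec q (star q)).IsHermitian := by
    rw [IsHermitian, conjTranspose_vecMulVec, star_star]
  have hT := (hB.add (hqq.smul (Complex.conj_ofReal θ))).isUnit_sub_smul hz
  refine ⟨hS, hT, ?_⟩
  have hpert : B + (θ : ℂ) • vecMulVec q (star q) - z • 1 =
      (B - z • 1) + vecMulVec ((θ : ℂ) • q) (star q) := by
    rw [smul_vecMulVec]; abel
  rw [hpert] at hT ⊢
  have hD := one_add_dotProduct_inv_mulVec_ne_zero hS _ _ hT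
  have hleft : star q ᵥ* (B - z • 1)⁻¹ = star ((B - z • 1)⁻¹ᴴ *ᵥ q) := by
    rw [star_mulVec, conjTranspose_conjTranspose]
  rw [trace_inv_sub_inv_add_vecMulVec_mul hS _ _ hT, hleft]
  simp only [mulVec_smul, dotProduct_smul, smul_eq_mul] at hD ⊢
  rw [norm_div, div_le_div_iff₀ (norm_pos_iff.mpr hD) hv0, norm_mul, Complex.norm_real,
    Real.norm_eq_abs]
  set x := (B - z • 1)⁻¹ *ᵥ q
  calc _ ≤ |θ| * (‖A‖ * ‖WithLp.toLp 2 x‖ ^ 2) * z.im := by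
        gcongr; exact hB.norm_star_dotProduct_inv_sub_smul_mulVec_le hz A q
    _ = ‖A‖ * (|θ| * (z.im * ‖WithLp.toLp 2 x‖ ^ 2)) := by ring
    _ ≤ ‖A‖ * ‖1 + (θ : ℂ) * (star q ⬝ᵥ x)‖ := by
        gcongr; exact hB.le_norm_one_add_ofReal_mul_star_dotProduct_inv_sub_smul_mulVec hv0 θ q

/-- **Lemma 2.** Let `z ∈ ℂ` with `v = Im z > 0`, `A` any `p × p` complex matrix, `B` a
`p × p` Hermitian matrix, `q ∈ ℂ^p` and `θ ∈ ℝ`. Then `B − zI` and `B + θqq* − zI` are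
invertible and `|tr(((B − zI)⁻¹ − (B + θqq* − zI)⁻¹)A)| ≤ ‖A‖ / v`, where `‖·‖` is the
operator norm and `qq*` the rank-one matrix built from `q`. -/
theorem trace_resolvent_rank_one_perturbation
    {p : ℕ} (hp : 1 ≤ p) (z : ℂ) (v : ℝ) (hv : z.im = v) (hv0 : 0 < v)
    (A B : Matrix (Fin p) (Fin p) ℂ) (hB : B.IsHermitian)
    (q : Fin p → ℂ) (θ : ℝ) :
    IsUnit (B - z • (1 : Matrix (Fin p) (Fin p) ℂ)) ∧
    IsUnit (B + (θ : ℂ) • vecMulVec q (star q) - z • (1 : Matrix (Fin p) (Fin p) ℂ)) ∧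
      ‖(Matrix.trace
            (((B - z • (1 : Matrix (Fin p) (Fin p) ℂ))⁻¹ -
                (B + (θ : ℂ) • vecMulVec q (star q) -
                  z • (1 : Matrix (Fin p) (Fin p) ℂ))⁻¹) * A))‖
        ≤ ‖A‖ / v :=
  trace_resolvent_rank_one_perturbation_general z v hv hv0 A B hB q θ
end

section
/- Let z = iv with v > 0, let A be a p×p Hermitian positive semidefinite matrix, let q ∈ ℂ^p, and let a > 0. Then 1 + a·q*(A − zI)⁻¹q ≠ 0 and −(1/z) · (1 + a·q*(A − zI)⁻¹q)⁻¹ lies in Q₁ = {w ∈ ℂ : Re w ≥ 0 and Im w ≥ 0}. -/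
open Matrix
open scoped ComplexOrder

/-!
With `u = (A - zI)⁻¹ q` the quadratic form is `q*(A - zI)⁻¹q = u*(A - zI)ᴴu = u*Au + iv‖u‖²`,
which lies in `Q₁`; hence so does `s = 1 + a·q*(A - zI)⁻¹q`, and `Re s ≥ 1`. Finally
`-(1/(iv))·s⁻¹ = i·s̄ / (v|s|²)` and multiplication by `i` turns the fourth quadrant, which
contains `s̄`, into the first one.
-/

/-- The paper's `Q₁`. -/
def firstQuadrant : Set ℂ := {w | 0 ≤ w.re ∧ 0 ≤ w.im}

lemma mem_firstQuadrant {w : ℂ} : w ∈ firstQuadrant ↔ 0 ≤ w.re ∧ 0 ≤ w.im := Iff.rfl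

-- Also true when `B` is singular, since then `B⁻¹ = 0`.
lemma Matrix.dotProduct_nonsing_inv_mulVec_eq {n R : Type*} [Fintype n] [DecidableEq n]
    [CommRing R] [StarRing R] (B : Matrix n n R) (q : n → R) :
    star q ⬝ᵥ (B⁻¹ *ᵥ q) = star (B⁻¹ *ᵥ q) ⬝ᵥ (Bᴴ *ᵥ (B⁻¹ *ᵥ q)) := by
  by_cases hB : IsUnit B.det
  · have hq : B *ᵥ (B⁻¹ *ᵥ q) = q := by rw [mulVec_mulVec, mul_nonsing_inv B hB, one_mulVec]
    nth_rewrite 1 [← hq]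
    rw [star_mulVec, ← dotProduct_mulVec]
  · simp [nonsing_inv_apply_not_isUnit B hB]

lemma Matrix.PosSemidef.dotProduct_inv_sub_smul_one_mulVec_mem_firstQuadrant {n : Type*}
    [Fintype n] [DecidableEq n] {A : Matrix n n ℂ} (hA : A.PosSemidef) {z : ℂ}
    (hre : z.re ≤ 0) (him : 0 ≤ z.im) (q : n → ℂ) :
    star q ⬝ᵥ ((A - z • 1)⁻¹ *ᵥ q) ∈ firstQuadrant := by
  set u := (A - z • (1 : Matrix n n ℂ))⁻¹ *ᵥ q
  have hform : star q ⬝ᵥ ((A - z • 1)⁻¹ *ᵥ q) =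
      star u ⬝ᵥ (A *ᵥ u) - star z * (star u ⬝ᵥ u) := by
    rw [dotProduct_nonsing_inv_mulVec_eq, conjTranspose_sub, conjTranspose_smul,
      conjTranspose_one, hA.1.eq, sub_mulVec, smul_mulVec, one_mulVec, dotProduct_sub,
      dotProduct_smul, smul_eq_mul]
  obtain ⟨hAu_re, hAu_im⟩ := Complex.le_def.mp (hA.dotProduct_mulVec_nonneg u)
  obtain ⟨huu_re, huu_im⟩ := Complex.le_def.mp (dotProduct_star_self_nonneg u)
  simp only [Complex.zero_re, Complex.zero_im] at hAu_re hAu_im huu_re huu_im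
  rw [hform, mem_firstQuadrant, Complex.sub_re, Complex.sub_im, Complex.mul_re,
    Complex.mul_im, ← hAu_im, ← huu_im, Complex.star_def, Complex.conj_re, Complex.conj_im]
  constructor <;> nlinarith

lemma one_add_ofReal_mul_re_pos {w : ℂ} (hw : w ∈ firstQuadrant) {a : ℝ} (ha : 0 ≤ a) :
    0 < (1 + (a : ℂ) * w).re := by
  simp only [Complex.add_re, Complex.one_re, Complex.re_ofReal_mul]
  nlinarith [hw.1]

lemma one_add_ofReal_mul_mem_firstQuadrant {w : ℂ} (hw : w ∈ firstQuadrant) {a : ℝ}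
    (ha : 0 ≤ a) : 1 + (a : ℂ) * w ∈ firstQuadrant := by
  refine ⟨(one_add_ofReal_mul_re_pos hw ha).le, ?_⟩
  simp only [Complex.add_im, Complex.one_im, Complex.im_ofReal_mul, zero_add]
  exact mul_nonneg ha hw.2

lemma neg_one_div_I_mul_ofReal_mul_inv_mem_firstQuadrant {v : ℝ} (hv : 0 ≤ v) {s : ℂ}
    (hs : s ∈ firstQuadrant) : -(1 / (Complex.I * v)) * s⁻¹ ∈ firstQuadrant := by
  have hI : -(1 / (Complex.I * v)) = Complex.I * (v⁻¹ : ℝ) := by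
    rw [one_div, mul_inv, Complex.inv_I, Complex.ofReal_inv]
    ring
  rw [hI, mem_firstQuadrant, mul_assoc, Complex.I_mul_re, Complex.I_mul_im,
    Complex.re_ofReal_mul, Complex.im_ofReal_mul, Complex.inv_re, Complex.inv_im, neg_div,
    mul_neg, neg_neg]
  exact ⟨mul_nonneg (inv_nonneg.2 hv) (div_nonneg hs.2 (Complex.normSq_nonneg s)),
    mul_nonneg (inv_nonneg.2 hv) (div_nonneg hs.1 (Complex.normSq_nonneg s))⟩

/-- **Lemma 7.** Let `z = iv` with `v > 0`, `A` a `p × p` Hermitian positive semidefinite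
matrix, `q ∈ ℂ^p` and `a > 0`.  Then `1 + a·q*(A − zI)⁻¹q ≠ 0` and
`−(1/z)·(1 + a·q*(A − zI)⁻¹q)⁻¹` lies in `Q₁ = {w ∈ ℂ : Re w ≥ 0 and Im w ≥ 0}`. -/
theorem neg_inv_one_add_quadratic_in_Q1
    {p : ℕ} (v : ℝ) (hv : 0 < v) (z : ℂ) (hz : z = Complex.I * v)
    (A : Matrix (Fin p) (Fin p) ℂ) (hA : A.PosSemidef)
    (q : Fin p → ℂ) (a : ℝ) (ha : 0 < a) :
    (1 + (a : ℂ) * (star q ⬝ᵥ ((A - z • (1 : Matrix (Fin p) (Fin p) ℂ))⁻¹ *ᵥ q)) ≠ 0) ∧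
      0 ≤ (-(1 / z) *
          (1 + (a : ℂ) * (star q ⬝ᵥ ((A - z • (1 : Matrix (Fin p) (Fin p) ℂ))⁻¹ *ᵥ q)))⁻¹).re ∧
      0 ≤ (-(1 / z) *
          (1 + (a : ℂ) * (star q ⬝ᵥ ((A - z • (1 : Matrix (Fin p) (Fin p) ℂ))⁻¹ *ᵥ q)))⁻¹).im := by
  subst hz
  have hw := hA.dotProduct_inv_sub_smul_one_mulVec_mem_firstQuadrant
    (z := Complex.I * v) (by simp) (by simpa using hv.le) q
  have hs := one_add_ofReal_mul_mem_firstQuadrant hw ha.le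
  have hs_ne : 1 + (a : ℂ) * _ ≠ 0 := fun h ↦
    (one_add_ofReal_mul_re_pos hw ha.le).ne' (by rw [h, Complex.zero_re])
  exact ⟨hs_ne, neg_one_div_I_mul_ofReal_mul_inv_mem_firstQuadrant hv.le hs⟩
end

section
/- In the matrix setup below, let z ∈ ℂ be such that M − zI and M_k − zI (for every 1 ≤ k ≤ p) are invertible and 1 + (h_k + t_kk e_k)*(M_k − zI)⁻¹ e_k ≠ 0 for every k. Then tr(M(M − zI)⁻¹) = Σ_{k=1}^p [(h_k + t_kk e_k)*(M_k − zI)⁻¹ e_k] / [1 + (h_k + t_kk e_k)*(M_k − zI)⁻¹ e_k]; equivalently, tr(I + z(M − zI)⁻¹) equals the same sum. -/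
/-!
`M` differs from `M_k` only in its `k`-th row, which is `(h_k + t_kk e_k)*`, so `M − zI` is a
rank-one update of `M_k − zI`. With `x = (M_k − zI)⁻¹ e_k` and `q_k = (h_k + t_kk e_k)* x` one gets
`(M − zI) x = (1 + q_k) e_k`, hence `(M − zI)⁻¹ e_k = x / (1 + q_k)` (Sherman–Morrison), and the
`k`-th diagonal entry of `M (M − zI)⁻¹` is `q_k / (1 + q_k)`. Summing over `k` gives the trace,
and `M (M − zI)⁻¹ = I + z (M − zI)⁻¹` gives the second identity.
-/

open Matrix

namespace HYRemark2

variable {p n : ℕ}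

/-- `w_k`: the conjugate transpose of the `k`-th row of `W`. -/
noncomputable def wk (W : Matrix (Fin p) (Fin n) ℂ) (k : Fin p) : Fin n → ℂ :=
  fun j => star (W k j)

/-- `W_k`: the matrix `W` with its `k`-th row replaced by zeros. -/
def Wdel (W : Matrix (Fin p) (Fin n) ℂ) (k : Fin p) : Matrix (Fin p) (Fin n) ℂ :=
  W.updateRow k 0

/-- `h_k = α · W_k w_k`. -/
noncomputable def hvec (α : ℝ) (W : Matrix (Fin p) (Fin n) ℂ) (k : Fin p) : Fin p → ℂ :=
  (α : ℂ) • (Wdel W k *ᵥ wk W k)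

/-- `t_kk = α (w_k* w_k − τ λ_k)`. -/
noncomputable def tkk (α τ : ℝ) (lam : Fin p → ℝ) (W : Matrix (Fin p) (Fin n) ℂ)
    (k : Fin p) : ℂ :=
  (α : ℂ) * (star (wk W k) ⬝ᵥ wk W k - (τ : ℂ) * (lam k : ℂ))

/-- `M = α (W W* − τ Λ)` where `Λ = diag(λ₁, …, λ_p)`. -/
noncomputable def Mmat (α τ : ℝ) (lam : Fin p → ℝ) (W : Matrix (Fin p) (Fin n) ℂ) :
    Matrix (Fin p) (Fin p) ℂ :=
  (α : ℂ) • (W * Wᴴ - (τ : ℂ) • Matrix.diagonal fun i => (lam i : ℂ))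

/-- `M_k = α (W_k W* − τ Λ_k)` where `Λ_k` is `Λ` with `k`-th diagonal entry zeroed. -/
noncomputable def Mkmat (α τ : ℝ) (lam : Fin p → ℝ) (W : Matrix (Fin p) (Fin n) ℂ)
    (k : Fin p) : Matrix (Fin p) (Fin p) ℂ :=
  (α : ℂ) •
    (Wdel W k * Wᴴ - (τ : ℂ) • Matrix.diagonal fun i => ((Function.update lam k 0) i : ℂ))

/-- `(h_k + t_kk e_k)* (M_k − zI)⁻¹ e_k`. -/
noncomputable def qform (α τ : ℝ) (lam : Fin p → ℝ) (W : Matrix (Fin p) (Fin n) ℂ)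
    (z : ℂ) (k : Fin p) : ℂ :=
  star (hvec α W k + tkk α τ lam W k • (Pi.single k 1 : Fin p → ℂ)) ⬝ᵥ
    ((Mkmat α τ lam W k - z • (1 : Matrix (Fin p) (Fin p) ℂ))⁻¹ *ᵥ
      (Pi.single k 1 : Fin p → ℂ))

end HYRemark2

namespace Matrix

variable {m n R : Type*} [DecidableEq m]

theorem mulVec_eq_updateRow_zero_mulVec_add [Fintype n] [NonAssocSemiring R]
    (M : Matrix m n R) (k : m) (x : n → R) :
    M *ᵥ x = M.updateRow k 0 *ᵥ x + (M k ⬝ᵥ x) • Pi.single k 1 := by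
  ext i
  by_cases hi : i = k
  · subst hi
    simp [mulVec]
  · simp [mulVec, hi]

variable [Fintype m]

theorem mul_apply_self_eq_dotProduct_mulVec_single [NonAssocSemiring R] (M N : Matrix m m R)
    (k : m) : (M * N) k k = M k ⬝ᵥ (N *ᵥ Pi.single k 1) := by
  rw [mulVec_single_one]
  rfl

variable [Field R]

theorem inv_mulVec_eq_inv_smul {A : Matrix m m R} (hA : IsUnit A) {x u : m → R} {c : R}
    (hc : c ≠ 0) (h : A *ᵥ x = c • u) : A⁻¹ *ᵥ u = c⁻¹ • x := by
  obtain ⟨_⟩ := hA.nonempty_invertible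
  refine inv_mulVec_eq_vec ?_
  rw [mulVec_smul, h, smul_smul, inv_mul_cancel₀ hc, one_smul]

theorem mul_inv_sub_smul_one {M : Matrix m m R} {z : R} (hM : IsUnit (M - z • 1)) :
    M * (M - z • 1)⁻¹ = 1 + z • (M - z • 1)⁻¹ := by
  obtain ⟨_⟩ := hM.nonempty_invertible
  calc M * (M - z • 1)⁻¹ = (M - z • 1 + z • 1) * (M - z • 1)⁻¹ := by rw [sub_add_cancel]
    _ = 1 + z • (M - z • 1)⁻¹ := by rw [add_mul, mul_inv_of_invertible, smul_mul, one_mul]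

theorem mul_inv_sub_smul_one_apply_self (M : Matrix m m R) (k : m) (z : R)
    (hM : IsUnit (M - z • 1)) (hMk : IsUnit (M.updateRow k 0 - z • 1))
    (hq : 1 + M k ⬝ᵥ ((M.updateRow k 0 - z • 1)⁻¹ *ᵥ Pi.single k 1) ≠ 0) :
    (M * (M - z • 1)⁻¹) k k =
      M k ⬝ᵥ ((M.updateRow k 0 - z • 1)⁻¹ *ᵥ Pi.single k 1) /
        (1 + M k ⬝ᵥ ((M.updateRow k 0 - z • 1)⁻¹ *ᵥ Pi.single k 1)) := by
  set x := (M.updateRow k 0 - z • 1)⁻¹ *ᵥ Pi.single k 1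
  set q := M k ⬝ᵥ x
  have hx : (M.updateRow k 0 - z • 1) *ᵥ x = Pi.single k 1 := by
    obtain ⟨_⟩ := hMk.nonempty_invertible
    rw [mulVec_mulVec, mul_inv_of_invertible, one_mulVec]
  have hMx : (M - z • 1) *ᵥ x = (1 + q) • Pi.single k 1 := by
    rw [sub_mulVec, mulVec_eq_updateRow_zero_mulVec_add M k, add_sub_right_comm, ← sub_mulVec,
      hx, add_smul, one_smul]
  rw [mul_apply_self_eq_dotProduct_mulVec_single, inv_mulVec_eq_inv_smul hM hq hMx,
    dotProduct_smul, smul_eq_mul, div_eq_inv_mul]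

end Matrix

namespace HYRemark2

variable {p n : ℕ}

theorem Mkmat_eq_updateRow (α τ : ℝ) (lam : Fin p → ℝ) (W : Matrix (Fin p) (Fin n) ℂ)
    (k : Fin p) : Mkmat α τ lam W k = (Mmat α τ lam W).updateRow k 0 := by
  ext i j
  by_cases hi : i = k
  · subst hi
    simp [Mkmat, Wdel, mul_apply, diagonal_apply, Function.update_apply]
  · simp [Mkmat, Mmat, Wdel, mul_apply, diagonal_apply,
      Function.update_apply, hi]

theorem Mmat_row_eq_star (α τ : ℝ) (lam : Fin p → ℝ) (W : Matrix (Fin p) (Fin n) ℂ) (k : Fin p) :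
    Mmat α τ lam W k = star (hvec α W k + tkk α τ lam W k • Pi.single k 1) := by
  ext j
  by_cases hj : j = k
  · subst hj
    simp [Mmat, hvec, tkk, Wdel, wk, mul_apply, mulVec, dotProduct, mul_comm]
  · simp [Mmat, hvec, tkk, Wdel, wk, mul_apply, mulVec, dotProduct, hj, Ne.symm hj, mul_comm]

theorem qform_eq_dotProduct (α τ : ℝ) (lam : Fin p → ℝ) (W : Matrix (Fin p) (Fin n) ℂ) (z : ℂ)
    (k : Fin p) :
    qform α τ lam W z k = Mmat α τ lam W k ⬝ᵥ
      (((Mmat α τ lam W).updateRow k 0 - z • 1)⁻¹ *ᵥ Pi.single k 1) := by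
  rw [qform, Mmat_row_eq_star, Mkmat_eq_updateRow]

theorem trace_resolvent_sum_general (α τ : ℝ) (lam : Fin p → ℝ)
    (W : Matrix (Fin p) (Fin n) ℂ) (z : ℂ)
    (hM : IsUnit (Mmat α τ lam W - z • (1 : Matrix (Fin p) (Fin p) ℂ)))
    (hMk : ∀ k : Fin p, IsUnit (Mkmat α τ lam W k - z • (1 : Matrix (Fin p) (Fin p) ℂ)))
    (hden : ∀ k : Fin p, 1 + qform α τ lam W z k ≠ 0) :
    Matrix.trace
        (Mmat α τ lam W *
          (Mmat α τ lam W - z • (1 : Matrix (Fin p) (Fin p) ℂ))⁻¹) =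
        ∑ k : Fin p, qform α τ lam W z k / (1 + qform α τ lam W z k) ∧
      Matrix.trace
          ((1 : Matrix (Fin p) (Fin p) ℂ) +
            z • (Mmat α τ lam W - z • (1 : Matrix (Fin p) (Fin p) ℂ))⁻¹) =
        ∑ k : Fin p, qform α τ lam W z k / (1 + qform α τ lam W z k) := by
  have htrace : trace (Mmat α τ lam W * (Mmat α τ lam W - z • 1)⁻¹) =
      ∑ k, qform α τ lam W z k / (1 + qform α τ lam W z k) := by
    refine Finset.sum_congr rfl fun k _ => ?_
    simp only [qform_eq_dotProduct] at hden ⊢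
    simp only [Mkmat_eq_updateRow] at hMk
    exact mul_inv_sub_smul_one_apply_self _ k z hM (hMk k) (hden k)
  exact ⟨htrace, mul_inv_sub_smul_one hM ▸ htrace⟩

/-- **Remark 2.** If `M − zI` and all `M_k − zI` are invertible and all denominators
`1 + (h_k + t_kk e_k)*(M_k − zI)⁻¹ e_k` are nonzero, then
`tr(M(M − zI)⁻¹) = Σ_k [(h_k + t_kk e_k)*(M_k − zI)⁻¹ e_k]/[1 + (h_k + t_kk e_k)*(M_k − zI)⁻¹ e_k]`,
and `tr(I + z(M − zI)⁻¹)` equals the same sum. -/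
theorem trace_resolvent_sum (α τ : ℝ) (hα : 0 < α) (lam : Fin p → ℝ)
    (W : Matrix (Fin p) (Fin n) ℂ) (z : ℂ)
    (hM : IsUnit (Mmat α τ lam W - z • (1 : Matrix (Fin p) (Fin p) ℂ)))
    (hMk : ∀ k : Fin p, IsUnit (Mkmat α τ lam W k - z • (1 : Matrix (Fin p) (Fin p) ℂ)))
    (hden : ∀ k : Fin p, 1 + qform α τ lam W z k ≠ 0) :
    Matrix.trace
        (Mmat α τ lam W *
          (Mmat α τ lam W - z • (1 : Matrix (Fin p) (Fin p) ℂ))⁻¹) =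
        ∑ k : Fin p, qform α τ lam W z k / (1 + qform α τ lam W z k) ∧
      Matrix.trace
          ((1 : Matrix (Fin p) (Fin p) ℂ) +
            z • (Mmat α τ lam W - z • (1 : Matrix (Fin p) (Fin p) ℂ))⁻¹) =
        ∑ k : Fin p, qform α τ lam W z k / (1 + qform α τ lam W z k) :=
  trace_resolvent_sum_general α τ lam W z hM hMk hden

end HYRemark2
end

section
/- In the matrix setup below, let z ∈ ℂ be nonzero and such that M̄_k − zI is invertible, where M̄_k = α(W_k W_k* − τΛ_k). Then M_k − zI is also invertible, e_k*(M̄_k − zI)⁻¹ h_k = 0, and (h_k + t_kk e_k)*(M_k − zI)⁻¹ e_k = (h_k*(M̄_k − zI)⁻¹ h_k − t_kk) / z. -/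
open Matrix

namespace HYRemark3

variable {p n : ℕ}

/-- `w_k`: the conjugate transpose of the `k`-th row of `W`. -/
noncomputable def wk (W : Matrix (Fin p) (Fin n) ℂ) (k : Fin p) : Fin n → ℂ :=
  fun j => star (W k j)

/-- `W_k`: the matrix `W` with its `k`-th row replaced by zeros. -/
def Wdel (W : Matrix (Fin p) (Fin n) ℂ) (k : Fin p) : Matrix (Fin p) (Fin n) ℂ :=
  W.updateRow k 0

/-- `h_k = α · W_k w_k`. -/
noncomputable def hvec (α : ℝ) (W : Matrix (Fin p) (Fin n) ℂ) (k : Fin p) : Fin p → ℂ :=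
  (α : ℂ) • (Wdel W k *ᵥ wk W k)

/-- `t_kk = α (w_k* w_k − τ λ_k)`. -/
noncomputable def tkk (α τ : ℝ) (lam : Fin p → ℝ) (W : Matrix (Fin p) (Fin n) ℂ)
    (k : Fin p) : ℂ :=
  (α : ℂ) * (star (wk W k) ⬝ᵥ wk W k - (τ : ℂ) * (lam k : ℂ))

/-- `M_k = α (W_k W* − τ Λ_k)` where `Λ_k` is `Λ` with `k`-th diagonal entry zeroed. -/
noncomputable def Mkmat (α τ : ℝ) (lam : Fin p → ℝ) (W : Matrix (Fin p) (Fin n) ℂ)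
    (k : Fin p) : Matrix (Fin p) (Fin p) ℂ :=
  (α : ℂ) •
    (Wdel W k * Wᴴ - (τ : ℂ) • Matrix.diagonal fun i => ((Function.update lam k 0) i : ℂ))

/-- `M̄_k = α (W_k W_k* − τ Λ_k)`. -/
noncomputable def Mbarmat (α τ : ℝ) (lam : Fin p → ℝ) (W : Matrix (Fin p) (Fin n) ℂ)
    (k : Fin p) : Matrix (Fin p) (Fin p) ℂ :=
  (α : ℂ) •
    (Wdel W k * (Wdel W k)ᴴ -
      (τ : ℂ) • Matrix.diagonal fun i => ((Function.update lam k 0) i : ℂ))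

/-
Row and column `k` of `M̄_k` vanish, so `e_k` is a left and right eigenvector of
`A = M̄_k − zI` for the eigenvalue `−z`, while `(h_k)_k = 0`; hence
`e_kᵀ A⁻¹ h_k = −z⁻¹ e_kᵀ h_k = 0`.
Since `M_k − M̄_k = α W_k (W − W_k)* = h_k e_kᵀ`, the matrix `M_k − zI = A + h_k e_kᵀ` is a
rank-one perturbation of `A` whose Sherman–Morrison denominator `1 + e_kᵀ A⁻¹ h_k` equals `1`:
its inverse is `(1 − A⁻¹ h_k e_kᵀ) A⁻¹`, which sends `e_k` to `−z⁻¹ (e_k − A⁻¹ h_k)`.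
Pairing with `h_k + t_kk e_k` gives the formula.
-/

section ShermanMorrison

variable {K ι : Type*} [Field K] [Fintype ι] [DecidableEq ι] {A : Matrix ι ι K}

theorem add_vecMulVec_mul_eq_one (hA : IsUnit A.det) {u v : ι → K}
    (hvu : v ⬝ᵥ (A⁻¹ *ᵥ u) = 0) :
    (A + vecMulVec u v) * ((1 - vecMulVec (A⁻¹ *ᵥ u) v) * A⁻¹) = 1 := by
  have hfactor : (A + vecMulVec u v) * (1 - vecMulVec (A⁻¹ *ᵥ u) v) = A := by
    rw [Matrix.add_mul, Matrix.mul_sub, Matrix.mul_sub, Matrix.mul_one, Matrix.mul_one,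
      mul_vecMulVec, mulVec_mulVec, mul_nonsing_inv _ hA, one_mulVec, vecMulVec_mul_vecMulVec,
      hvu, zero_smul, vecMulVec_zero]
    abel
  rw [← Matrix.mul_assoc, hfactor, mul_nonsing_inv _ hA]

theorem inv_mulVec_eq_inv_smul (hA : IsUnit A.det) {c : K} (hc : c ≠ 0) {e : ι → K}
    (hAe : A *ᵥ e = c • e) : A⁻¹ *ᵥ e = c⁻¹ • e := by
  calc A⁻¹ *ᵥ e = c⁻¹ • A⁻¹ *ᵥ (c • e) := by
        rw [mulVec_smul, smul_smul, inv_mul_cancel₀ hc, one_smul]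
    _ = c⁻¹ • e := by rw [← hAe, mulVec_mulVec, nonsing_inv_mul _ hA, one_mulVec]

theorem vecMul_inv_eq_inv_smul (hA : IsUnit A.det) {c : K} (hc : c ≠ 0) {e : ι → K}
    (heA : e ᵥ* A = c • e) : e ᵥ* A⁻¹ = c⁻¹ • e := by
  calc e ᵥ* A⁻¹ = c⁻¹ • (c • e) ᵥ* A⁻¹ := by
        rw [smul_vecMul, smul_smul, inv_mul_cancel₀ hc, one_smul]
    _ = c⁻¹ • e := by rw [← heA, vecMul_vecMul, mul_nonsing_inv _ hA, vecMul_one]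

theorem dotProduct_inv_mulVec_eq_zero (hA : IsUnit A.det) {c : K} (hc : c ≠ 0) {e u : ι → K}
    (heA : e ᵥ* A = c • e) (heu : e ⬝ᵥ u = 0) : e ⬝ᵥ (A⁻¹ *ᵥ u) = 0 := by
  rw [dotProduct_mulVec, vecMul_inv_eq_inv_smul hA hc heA, smul_dotProduct, heu, smul_zero]

theorem inv_add_vecMulVec_mulVec_eq (hA : IsUnit A.det) {u v : ι → K}
    (hvu : v ⬝ᵥ (A⁻¹ *ᵥ u) = 0) {c : K} (hc : c ≠ 0) {e : ι → K} (hAe : A *ᵥ e = c • e) :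
    (A + vecMulVec u v)⁻¹ *ᵥ e = c⁻¹ • (e - (v ⬝ᵥ e) • A⁻¹ *ᵥ u) := by
  rw [inv_eq_right_inv (add_vecMulVec_mul_eq_one hA hvu), ← mulVec_mulVec,
    inv_mulVec_eq_inv_smul hA hc hAe, mulVec_smul, sub_mulVec, one_mulVec, vecMulVec_mulVec,
    op_smul_eq_smul]

end ShermanMorrison

theorem Wdel_self (W : Matrix (Fin p) (Fin n) ℂ) (k : Fin p) : Wdel W k k = 0 :=
  updateRow_self

theorem Mbarmat_self_apply (α τ : ℝ) (lam : Fin p → ℝ) (W : Matrix (Fin p) (Fin n) ℂ)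
    (k j : Fin p) : Mbarmat α τ lam W k k j = 0 := by
  rcases eq_or_ne k j with rfl | hkj
  · simp [Mbarmat, mul_apply, Wdel_self]
  · simp [Mbarmat, mul_apply, Wdel_self, hkj]

theorem Mbarmat_apply_self (α τ : ℝ) (lam : Fin p → ℝ) (W : Matrix (Fin p) (Fin n) ℂ)
    (k i : Fin p) : Mbarmat α τ lam W k i k = 0 := by
  rcases eq_or_ne i k with rfl | hik
  · simp [Mbarmat, mul_apply, Wdel_self]
  · simp [Mbarmat, mul_apply, Wdel_self, hik]

theorem single_vecMul_Mbarmat (α τ : ℝ) (lam : Fin p → ℝ) (W : Matrix (Fin p) (Fin n) ℂ)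
    (k : Fin p) : Pi.single k 1 ᵥ* Mbarmat α τ lam W k = 0 := by
  ext j
  simp [Mbarmat_self_apply]

theorem Mbarmat_mulVec_single (α τ : ℝ) (lam : Fin p → ℝ) (W : Matrix (Fin p) (Fin n) ℂ)
    (k : Fin p) : Mbarmat α τ lam W k *ᵥ Pi.single k 1 = 0 := by
  ext i
  simp [Mbarmat_apply_self]

theorem conjTranspose_sub_conjTranspose_Wdel (W : Matrix (Fin p) (Fin n) ℂ) (k : Fin p) :
    Wᴴ - (Wdel W k)ᴴ = vecMulVec (wk W k) (Pi.single k 1) := by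
  ext j i
  rcases eq_or_ne i k with rfl | hik
  · simp [Wdel, wk, vecMulVec_apply]
  · simp [Wdel, vecMulVec_apply, hik]

theorem hvec_self (α : ℝ) (W : Matrix (Fin p) (Fin n) ℂ) (k : Fin p) : hvec α W k k = 0 := by
  simp [hvec, mulVec, Wdel_self]

theorem Mkmat_eq_Mbarmat_add_vecMulVec (α τ : ℝ) (lam : Fin p → ℝ)
    (W : Matrix (Fin p) (Fin n) ℂ) (k : Fin p) :
    Mkmat α τ lam W k = Mbarmat α τ lam W k + vecMulVec (hvec α W k) (Pi.single k 1) := by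
  rw [hvec, smul_vecMulVec, ← mul_vecMulVec, ← conjTranspose_sub_conjTranspose_Wdel, Mkmat,
    Mbarmat, Matrix.mul_sub, ← smul_add]
  abel_nf

theorem star_tkk (α τ : ℝ) (lam : Fin p → ℝ) (W : Matrix (Fin p) (Fin n) ℂ) (k : Fin p) :
    star (tkk α τ lam W k) = tkk α τ lam W k := by
  simp [tkk, ← star_dotProduct]

theorem resolvent_rank_one_identity_general (α τ : ℝ) (lam : Fin p → ℝ)
    (W : Matrix (Fin p) (Fin n) ℂ) (z : ℂ) (hz : z ≠ 0) (k : Fin p)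
    (hMbar : IsUnit (Mbarmat α τ lam W k - z • (1 : Matrix (Fin p) (Fin p) ℂ))) :
    IsUnit (Mkmat α τ lam W k - z • (1 : Matrix (Fin p) (Fin p) ℂ)) ∧
      (star (Pi.single k 1 : Fin p → ℂ) ⬝ᵥ
          ((Mbarmat α τ lam W k - z • (1 : Matrix (Fin p) (Fin p) ℂ))⁻¹ *ᵥ hvec α W k)) = 0 ∧
      (star (hvec α W k + tkk α τ lam W k • (Pi.single k 1 : Fin p → ℂ)) ⬝ᵥ
          ((Mkmat α τ lam W k - z • (1 : Matrix (Fin p) (Fin p) ℂ))⁻¹ *ᵥ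
            (Pi.single k 1 : Fin p → ℂ))) =
        ((star (hvec α W k) ⬝ᵥ
            ((Mbarmat α τ lam W k - z • (1 : Matrix (Fin p) (Fin p) ℂ))⁻¹ *ᵥ hvec α W k)) -
          tkk α τ lam W k) / z := by
  set e : Fin p → ℂ := Pi.single k 1
  set A := Mbarmat α τ lam W k - z • (1 : Matrix (Fin p) (Fin p) ℂ)
  set h := hvec α W k
  have hA : IsUnit A.det := (isUnit_iff_isUnit_det A).mp hMbar
  have hz' : -z ≠ 0 := neg_ne_zero.mpr hz
  have hAe : A *ᵥ e = (-z) • e := by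
    rw [sub_mulVec, Mbarmat_mulVec_single, smul_mulVec, one_mulVec, zero_sub, neg_smul]
  have heA : e ᵥ* A = (-z) • e := by
    rw [vecMul_sub, single_vecMul_Mbarmat, vecMul_smul, vecMul_one, zero_sub, neg_smul]
  have hk : h k = 0 := hvec_self α W k
  have heu : e ⬝ᵥ (A⁻¹ *ᵥ h) = 0 :=
    dotProduct_inv_mulVec_eq_zero hA hz' heA (by rw [single_dotProduct, hk, mul_zero])
  have hB : Mkmat α τ lam W k - z • 1 = A + vecMulVec h e := by
    rw [Mkmat_eq_Mbarmat_add_vecMulVec, add_sub_right_comm]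
  have hstar_e : star e = e := by rw [← Pi.single_star, star_one]
  have hee : e ⬝ᵥ e = 1 := by simp [e]
  have hhe : star h ⬝ᵥ e = 0 := by rw [dotProduct_single, Pi.star_apply, hk, star_zero, zero_mul]
  refine ⟨?_, by rwa [hstar_e], ?_⟩
  · rw [hB, isUnit_iff_isUnit_det]
    exact isUnit_det_of_right_inverse (add_vecMulVec_mul_eq_one hA heu)
  · rw [hB, inv_add_vecMulVec_mulVec_eq hA heu hz' hAe, star_add, star_smul, star_tkk, hstar_e]
    simp only [add_dotProduct, dotProduct_smul, smul_dotProduct, dotProduct_sub, heu, hee, hhe,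
      smul_eq_mul]
    rw [inv_neg, div_eq_inv_mul]
    ring

/-- **Remark 3.** Let `z ≠ 0` with `M̄_k − zI` invertible. Then `M_k − zI` is invertible,
`e_k*(M̄_k − zI)⁻¹ h_k = 0`, and
`(h_k + t_kk e_k)*(M_k − zI)⁻¹ e_k = (h_k*(M̄_k − zI)⁻¹ h_k − t_kk)/z`. -/
theorem resolvent_rank_one_identity (α τ : ℝ) (hα : 0 < α) (lam : Fin p → ℝ)
    (W : Matrix (Fin p) (Fin n) ℂ) (z : ℂ) (hz : z ≠ 0) (k : Fin p)
    (hMbar : IsUnit (Mbarmat α τ lam W k - z • (1 : Matrix (Fin p) (Fin p) ℂ))) :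
    IsUnit (Mkmat α τ lam W k - z • (1 : Matrix (Fin p) (Fin p) ℂ)) ∧
      (star (Pi.single k 1 : Fin p → ℂ) ⬝ᵥ
          ((Mbarmat α τ lam W k - z • (1 : Matrix (Fin p) (Fin p) ℂ))⁻¹ *ᵥ hvec α W k)) = 0 ∧
      (star (hvec α W k + tkk α τ lam W k • (Pi.single k 1 : Fin p → ℂ)) ⬝ᵥ
          ((Mkmat α τ lam W k - z • (1 : Matrix (Fin p) (Fin p) ℂ))⁻¹ *ᵥ
            (Pi.single k 1 : Fin p → ℂ))) =
        ((star (hvec α W k) ⬝ᵥ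
            ((Mbarmat α τ lam W k - z • (1 : Matrix (Fin p) (Fin p) ℂ))⁻¹ *ᵥ hvec α W k)) -
          tkk α τ lam W k) / z :=
  resolvent_rank_one_identity_general α τ lam W z hz k hMbar

end HYRemark3
end

section
/- Let c > 0, let H be a Borel probability measure on [0, ∞) with ∫ λ² dH(λ) < ∞, and let τ' : [0,1] → [0, ∞) be a measurable function with ∫₀¹ (τ'_t)² dt < ∞. Let v > 0 satisfy v² > c · (∫₀¹ (τ'_t)² dt) · (∫ λ² dH(λ)), and set z = iv. If ṡ₁ and ṡ₂ both lie in Q₁ = {w ∈ ℂ : Re w ≥ 0 and Im w ≥ 0} and both satisfy the fixed-point equation ṡ = −(1/z) ∫ λ / (1 − (λ/z) ∫₀¹ τ'_t/(1 + c·τ'_t·ṡ) dt) dH(λ), then ṡ₁ = ṡ₂. -/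
open MeasureTheory intervalIntegral

/-! Both integrals in the fixed-point equation have the form `R(w) = ∫ φ / (1 + φ w)` with
`φ ≥ 0` and `Re w ≥ 0`, so every denominator has modulus at least `1` and
`‖R(w₁) - R(w₂)‖ ≤ (∫ φ²) ‖w₁ - w₂‖`. For `s` in the first quadrant the inner integral
`g(s) = ∫₀¹ τ' / (1 + τ' · c s)` has `Im g(s) ≤ 0`, which is exactly `Re(-g(s)/z) ≥ 0`
for `z = iv`. Composing the two Lipschitz bounds, the right-hand side of the equation is a
contraction of the first quadrant with constant `c (∫₀¹ τ'²)(∫ λ² dH) / v² < 1`. -/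

namespace Complex

lemma one_le_re_one_add_ofReal_mul {y : ℝ} {w : ℂ} (hy : 0 ≤ y) (hw : 0 ≤ w.re) :
    1 ≤ (1 + y * w).re := by
  simpa using mul_nonneg hy hw

lemma one_le_norm_one_add_ofReal_mul {y : ℝ} {w : ℂ} (hy : 0 ≤ y) (hw : 0 ≤ w.re) :
    1 ≤ ‖1 + y * w‖ :=
  (one_le_re_one_add_ofReal_mul hy hw).trans (re_le_norm _)

lemma norm_ofReal_div_one_add_ofReal_mul_le {y : ℝ} {w : ℂ} (hy : 0 ≤ y) (hw : 0 ≤ w.re) :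
    ‖(y : ℂ) / (1 + y * w)‖ ≤ y := by
  rw [norm_div, norm_real, Real.norm_of_nonneg hy]
  exact div_le_self hy (one_le_norm_one_add_ofReal_mul hy hw)

lemma norm_ofReal_div_one_add_ofReal_mul_sub_le {y : ℝ} {w₁ w₂ : ℂ} (hy : 0 ≤ y)
    (hw₁ : 0 ≤ w₁.re) (hw₂ : 0 ≤ w₂.re) :
    ‖(y : ℂ) / (1 + y * w₁) - y / (1 + y * w₂)‖ ≤ y ^ 2 * ‖w₁ - w₂‖ := by
  have h₁ := one_le_norm_one_add_ofReal_mul hy hw₁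
  have h₂ := one_le_norm_one_add_ofReal_mul hy hw₂
  have hne₁ : (1 + y * w₁ : ℂ) ≠ 0 := norm_pos_iff.mp (by linarith)
  have hne₂ : (1 + y * w₂ : ℂ) ≠ 0 := norm_pos_iff.mp (by linarith)
  have key : (y : ℂ) / (1 + y * w₁) - y / (1 + y * w₂)
      = y ^ 2 * (w₂ - w₁) / ((1 + y * w₁) * (1 + y * w₂)) := by
    field_simp
    ring
  rw [key, norm_div, norm_mul, norm_mul, norm_pow, norm_real, Real.norm_eq_abs, sq_abs,
    norm_sub_rev]
  exact div_le_self (by positivity) (one_le_mul_of_one_le_of_one_le h₁ h₂)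

lemma im_ofReal_div_one_add_ofReal_mul_nonpos {y : ℝ} {w : ℂ} (hy : 0 ≤ y) (hw : 0 ≤ w.im) :
    ((y : ℂ) / (1 + y * w)).im ≤ 0 := by
  rw [div_eq_mul_inv, im_ofReal_mul, inv_im]
  simp only [add_im, one_im, im_ofReal_mul, zero_add]
  exact mul_nonpos_of_nonneg_of_nonpos hy
    (div_nonpos_of_nonpos_of_nonneg (neg_nonpos.mpr (mul_nonneg hy hw)) (normSq_nonneg _))

end Complex

open Complex

section ResolventIntegral

variable {α : Type*} [MeasurableSpace α] {μ : Measure α} {φ : α → ℝ}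

noncomputable def resolventIntegral (μ : Measure α) (φ : α → ℝ) (w : ℂ) : ℂ :=
  ∫ a, (φ a : ℂ) / (1 + φ a * w) ∂μ

lemma integrable_ofReal_div_one_add_ofReal_mul [IsFiniteMeasure μ] (hφ : Measurable φ)
    (hφ0 : ∀ᵐ a ∂μ, 0 ≤ φ a) (hφ2 : Integrable (fun a => φ a ^ 2) μ) {w : ℂ} (hw : 0 ≤ w.re) :
    Integrable (fun a => (φ a : ℂ) / (1 + φ a * w)) μ := by
  have hφ1 : Integrable φ μ :=
    ((memLp_two_iff_integrable_sq hφ.aestronglyMeasurable).mpr hφ2).integrable one_le_two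
  refine hφ1.mono' ?_ ?_
  · exact ((measurable_ofReal.comp hφ).div
      (measurable_const.add ((measurable_ofReal.comp hφ).mul_const w))).aestronglyMeasurable
  · filter_upwards [hφ0] with a ha
    exact norm_ofReal_div_one_add_ofReal_mul_le ha hw

lemma im_resolventIntegral_nonpos (hφ0 : ∀ᵐ a ∂μ, 0 ≤ φ a) {w : ℂ} (hw : 0 ≤ w.im) :
    (resolventIntegral μ φ w).im ≤ 0 := by
  by_cases hint : Integrable (fun a => (φ a : ℂ) / (1 + φ a * w)) μ
  · refine (integral_im hint).symm.trans_le (integral_nonpos_of_ae ?_)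
    filter_upwards [hφ0] with a ha
    exact im_ofReal_div_one_add_ofReal_mul_nonpos ha hw
  · simp [resolventIntegral, integral_undef hint]

lemma norm_resolventIntegral_sub_le [IsFiniteMeasure μ] (hφ : Measurable φ)
    (hφ0 : ∀ᵐ a ∂μ, 0 ≤ φ a) (hφ2 : Integrable (fun a => φ a ^ 2) μ) {w₁ w₂ : ℂ}
    (hw₁ : 0 ≤ w₁.re) (hw₂ : 0 ≤ w₂.re) :
    ‖resolventIntegral μ φ w₁ - resolventIntegral μ φ w₂‖
      ≤ (∫ a, φ a ^ 2 ∂μ) * ‖w₁ - w₂‖ := by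
  rw [resolventIntegral, resolventIntegral,
    ← integral_sub (integrable_ofReal_div_one_add_ofReal_mul hφ hφ0 hφ2 hw₁)
      (integrable_ofReal_div_one_add_ofReal_mul hφ hφ0 hφ2 hw₂),
    ← MeasureTheory.integral_mul_const]
  refine norm_integral_le_of_norm_le (hφ2.mul_const _) ?_
  filter_upwards [hφ0] with a ha
  exact norm_ofReal_div_one_add_ofReal_mul_sub_le ha hw₁ hw₂

lemma norm_resolventIntegral_ofReal_mul_sub_le [IsFiniteMeasure μ] (hφ : Measurable φ)
    (hφ0 : ∀ᵐ a ∂μ, 0 ≤ φ a) (hφ2 : Integrable (fun a => φ a ^ 2) μ) {c : ℝ} (hc : 0 ≤ c)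
    {s₁ s₂ : ℂ} (hs₁ : 0 ≤ s₁.re) (hs₂ : 0 ≤ s₂.re) :
    ‖resolventIntegral μ φ (c * s₁) - resolventIntegral μ φ (c * s₂)‖
      ≤ c * (∫ a, φ a ^ 2 ∂μ) * ‖s₁ - s₂‖ := by
  have h := norm_resolventIntegral_sub_le hφ hφ0 hφ2 (w₁ := c * s₁) (w₂ := c * s₂)
    (by simpa using mul_nonneg hc hs₁) (by simpa using mul_nonneg hc hs₂)
  rw [← mul_sub, norm_mul, norm_real, Real.norm_of_nonneg hc] at h
  linarith

end ResolventIntegral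

lemma re_neg_div_I_mul_nonneg {g : ℂ} (hg : g.im ≤ 0) {v : ℝ} (hv : 0 < v) :
    0 ≤ (-g / (I * v)).re := by
  have : -g / (I * v) = I * g / v := by
    rw [div_mul_eq_div_div, div_I]
    ring
  rw [this, div_ofReal_re]
  simpa using div_nonneg (neg_nonneg.mpr hg) hv.le

lemma intervalIntegral_div_one_add_mul_eq_resolventIntegral {a b : ℝ} (hab : a ≤ b)
    (φ : ℝ → ℝ) (c : ℝ) (s : ℂ) :
    ∫ t in a..b, (φ t : ℂ) / (1 + c * φ t * s)
      = resolventIntegral (volume.restrict (Set.Ioc a b)) φ (c * s) := by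
  rw [integral_of_le hab, resolventIntegral]
  congr with t
  ring

lemma integral_div_one_sub_div_mul_eq_resolventIntegral (μ : Measure ℝ) (z g : ℂ) :
    ∫ x, (x : ℂ) / (1 - x / z * g) ∂μ = resolventIntegral μ (fun x => x) (-g / z) := by
  rw [resolventIntegral]
  congr with x
  ring

lemma norm_inv_I_mul_resolventIntegral_sub_le {μ : Measure ℝ} [IsFiniteMeasure μ]
    (hμ : ∀ᵐ x ∂μ, 0 ≤ x) (hμ2 : Integrable (fun x => x ^ 2) μ) {v : ℝ} (hv : 0 < v)
    {g₁ g₂ : ℂ} (hg₁ : g₁.im ≤ 0) (hg₂ : g₂.im ≤ 0) :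
    ‖(I * v)⁻¹ * resolventIntegral μ (fun x => x) (-g₁ / (I * v))
        - (I * v)⁻¹ * resolventIntegral μ (fun x => x) (-g₂ / (I * v))‖
      ≤ (∫ x, x ^ 2 ∂μ) / v ^ 2 * ‖g₁ - g₂‖ := by
  have hnorm : ‖(I * v : ℂ)‖ = v := by simp [abs_of_pos hv]
  have hR := norm_resolventIntegral_sub_le measurable_id' hμ hμ2
    (re_neg_div_I_mul_nonneg hg₁ hv) (re_neg_div_I_mul_nonneg hg₂ hv)
  rw [← sub_div, norm_div, neg_sub_neg, norm_sub_rev g₂, hnorm] at hR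
  rw [← mul_sub, norm_mul, norm_inv, hnorm]
  calc v⁻¹ * ‖_‖ ≤ v⁻¹ * ((∫ x, x ^ 2 ∂μ) * (‖g₁ - g₂‖ / v)) :=
        mul_le_mul_of_nonneg_left hR (by positivity)
    _ = (∫ x, x ^ 2 ∂μ) / v ^ 2 * ‖g₁ - g₂‖ := by field_simp

lemma eq_of_norm_sub_le_mul {a b : ℂ} {K : ℝ} (hK : K < 1) (h : ‖a - b‖ ≤ K * ‖a - b‖) :
    a = b := by
  rw [← sub_eq_zero, ← norm_le_zero_iff]
  nlinarith [norm_nonneg (a - b)]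

/-- **Uniqueness of the fixed point** (from the proof of Theorem 2).  Let `c > 0`, `H` a
Borel probability measure on `[0, ∞)` with finite second moment, and `τ' : [0,1] → [0,∞)`
measurable and square-integrable.  Let `v > 0` satisfy
`v² > c (∫₀¹ τ'² dt)(∫ λ² dH)` and set `z = iv`.  If `ṡ₁, ṡ₂ ∈ Q₁` both solve
`ṡ = −(1/z) ∫ λ/(1 − (λ/z) ∫₀¹ τ'_t/(1 + c τ'_t ṡ) dt) dH(λ)`, then `ṡ₁ = ṡ₂`. -/
theorem fixed_point_unique
    (c : ℝ) (hc : 0 < c)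
    (H : Measure ℝ) [IsProbabilityMeasure H] (hHsupp : H {x | x < 0} = 0)
    (hH2 : Integrable (fun x => x ^ 2) H)
    (τ' : ℝ → ℝ) (hτ'meas : Measurable τ') (hτ'nonneg : ∀ t, 0 ≤ τ' t)
    (hτ'2 : IntervalIntegrable (fun t => τ' t ^ 2) volume 0 1)
    (v : ℝ) (hv : 0 < v)
    (hvlarge : c * (∫ t in (0:ℝ)..1, τ' t ^ 2) * (∫ x, x ^ 2 ∂H) < v ^ 2)
    (z : ℂ) (hz : z = Complex.I * v)
    (s₁ s₂ : ℂ)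
    (hs₁Q : 0 ≤ s₁.re ∧ 0 ≤ s₁.im) (hs₂Q : 0 ≤ s₂.re ∧ 0 ≤ s₂.im)
    (heq₁ : s₁ = -z⁻¹ * ∫ x, ((x : ℂ) /
        (1 - ((x : ℂ) / z) *
          ∫ t in (0:ℝ)..1, ((τ' t : ℂ) / (1 + (c : ℂ) * (τ' t : ℂ) * s₁)))) ∂H)
    (heq₂ : s₂ = -z⁻¹ * ∫ x, ((x : ℂ) /
        (1 - ((x : ℂ) / z) *
          ∫ t in (0:ℝ)..1, ((τ' t : ℂ) / (1 + (c : ℂ) * (τ' t : ℂ) * s₂)))) ∂H) :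
    s₁ = s₂ := by
  subst hz
  rw [integral_of_le zero_le_one] at hvlarge
  set T := ∫ t in Set.Ioc (0:ℝ) 1, τ' t ^ 2
  set M := ∫ x, x ^ 2 ∂H
  set g : ℂ → ℂ := fun s => resolventIntegral (volume.restrict (Set.Ioc 0 1)) τ' (c * s)
  simp only [intervalIntegral_div_one_add_mul_eq_resolventIntegral zero_le_one,
    integral_div_one_sub_div_mul_eq_resolventIntegral] at heq₁ heq₂
  have hH0 : ∀ᵐ x ∂H, 0 ≤ x := by simpa only [ae_iff, not_le] using hHsupp
  have hτ'0 : ∀ᵐ t ∂(volume.restrict (Set.Ioc (0:ℝ) 1)), 0 ≤ τ' t := ae_of_all _ hτ'nonneg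
  have hg_im : ∀ s : ℂ, 0 ≤ s.im → (g s).im ≤ 0 := fun s hs =>
    im_resolventIntegral_nonpos hτ'0 (by simpa using mul_nonneg hc.le hs)
  have hg_lip : ‖g s₁ - g s₂‖ ≤ c * T * ‖s₁ - s₂‖ :=
    norm_resolventIntegral_ofReal_mul_sub_le hτ'meas hτ'0 hτ'2.1 hc.le hs₁Q.1 hs₂Q.1
  refine eq_of_norm_sub_le_mul (K := c * T * M / v ^ 2)
    ((div_lt_one (by positivity)).mpr hvlarge) ?_
  calc ‖s₁ - s₂‖ = ‖(I * v)⁻¹ * resolventIntegral H (fun x => x) (-g s₁ / (I * v))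
        - (I * v)⁻¹ * resolventIntegral H (fun x => x) (-g s₂ / (I * v))‖ := by
        conv_lhs => rw [heq₁, heq₂]
        rw [neg_mul, neg_mul, neg_sub_neg, norm_sub_rev]
    _ ≤ M / v ^ 2 * ‖g s₁ - g s₂‖ :=
        norm_inv_I_mul_resolventIntegral_sub_le hH0 hH2 hv (hg_im s₁ hs₁Q.2) (hg_im s₂ hs₂Q.2)
    _ ≤ M / v ^ 2 * (c * T * ‖s₁ - s₂‖) :=
        mul_le_mul_of_nonneg_left hg_lip (by positivity)
    _ = c * T * M / v ^ 2 * ‖s₁ - s₂‖ := by ring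
end
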